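/- Let m, N be integers with N ≥ 1, and set β := exp(πi m (N+2)/4) and γ := exp(πi m (N−2)/4). Then β + γ + 2(−1)^{N−1} = 0 if and only if one of the following holds: (i) m ≡ 0 (mod 4) and N is even; (ii) m ≡ 2 (mod 4) and N ≡ 2 (mod 4); (iii) m ≡ 4 (mod 8) and N is odd. Moreover, if β + γ + 2(−1)^{N−1} ≠ 0, then |β + γ + 2(−1)^{N−1}| ≥ 2. -/

import Mathlib

/-!
Since `β = (-1)^m γ`, for odd `m` the sum `β + γ` vanishes and the quantity is `±2`.
For `m = 2k` one has `β = γ = i^{k(N-2)}`, and `(-1)^{N-1} = -i^{2N}`, so the quantity is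
`2 i^{2N} (u - 1)` with `u = i^{k(N-2)-2N}` a fourth root of unity. It vanishes iff
`4 ∣ k(N-2) - 2N`, a condition on `k mod 4` and `N mod 4` only; otherwise `u ∈ {-1, ±i}`
lies at distance at least `1` from `1`.
-/

open Complex

noncomputable def betaC (m : ℤ) (N : ℕ) : ℂ :=
  Complex.exp (Real.pi * Complex.I * (m : ℂ) * ((N : ℂ) + 2) / 4)

noncomputable def gammaC (m : ℤ) (N : ℕ) : ℂ :=
  Complex.exp (Real.pi * Complex.I * (m : ℂ) * ((N : ℂ) - 2) / 4)

theorem neg_one_pow_sub_one_eq_neg {R : Type*} [Ring R] {n : ℕ} (hn : 1 ≤ n) :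
    (-1 : R) ^ (n - 1) = -(-1) ^ n := by
  obtain ⟨k, rfl⟩ := Nat.exists_eq_add_of_le' hn
  simp [pow_succ]

theorem one_le_norm_sub_one_of_pow_four_eq_one {u : ℂ} (h4 : u ^ 4 = 1) (h1 : u ≠ 1) :
    1 ≤ ‖u - 1‖ := by
  have : (u - 1) * ((u + 1) * ((u - I) * (u + I))) = 0 := by
    linear_combination h4 - (u ^ 2 - 1) * I_sq
  simp only [mul_eq_zero, sub_eq_zero, add_eq_zero_iff_eq_neg] at this
  rcases this with rfl | rfl | rfl | rfl
  · exact absurd rfl h1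
  · norm_num
  · simpa using abs_im_le_norm (I - 1)
  · simpa using abs_im_le_norm (-I - 1)

theorem four_dvd_mul_sub_two_sub_iff (k : ℤ) (N : ℕ) :
    4 ∣ k * ((N : ℤ) - 2) - 2 * N ↔
      (2 * k % 4 = 0 ∧ Even N) ∨ (2 * k % 4 = 2 ∧ N % 4 = 2) ∨ (2 * k % 8 = 4 ∧ Odd N) := by
  rw [Nat.even_iff, Nat.odd_iff, Int.dvd_iff_emod_eq_zero, Int.sub_emod, Int.mul_emod]
  have hk : k % 4 < 4 := Int.emod_lt_of_pos k (by norm_num)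
  have hk' : 0 ≤ k % 4 := Int.emod_nonneg k (by norm_num)
  interval_cases h : k % 4 <;> omega

theorem betaC_eq_neg_one_zpow_mul_gammaC (m : ℤ) (N : ℕ) :
    betaC m N = (-1) ^ m * gammaC m N := by
  rw [betaC, gammaC, ← exp_pi_mul_I, ← exp_int_mul, ← exp_add]
  ring_nf

theorem gammaC_two_mul (k : ℤ) (N : ℕ) : gammaC (2 * k) N = I ^ (k * ((N : ℤ) - 2)) := by
  rw [gammaC]
  conv_rhs => rw [← exp_pi_div_two_mul_I, ← exp_int_mul]
  congr 1
  push_cast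
  ring

theorem betaC_add_gammaC_two_mul_add_one (k : ℤ) (N : ℕ) :
    betaC (2 * k + 1) N + gammaC (2 * k + 1) N = 0 := by
  rw [betaC_eq_neg_one_zpow_mul_gammaC, (odd_two_mul_add_one k).neg_one_zpow]
  ring

theorem betaC_add_gammaC_add_two_mul_neg_one_pow_of_two_mul (k : ℤ) {N : ℕ} (hN : 1 ≤ N) :
    betaC (2 * k) N + gammaC (2 * k) N + 2 * (-1 : ℂ) ^ (N - 1) =
      2 * I ^ (2 * (N : ℤ)) * (I ^ (k * ((N : ℤ) - 2) - 2 * N) - 1) := by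
  have h2N : I ^ (2 * (N : ℤ)) = (-1) ^ N := by rw [zpow_mul, zpow_two, I_mul_I, zpow_natCast]
  have hsplit : I ^ (2 * (N : ℤ)) * I ^ (k * ((N : ℤ) - 2) - 2 * N) =
      I ^ (k * ((N : ℤ) - 2)) := by
    rw [← zpow_add₀ I_ne_zero, add_sub_cancel]
  rw [betaC_eq_neg_one_zpow_mul_gammaC, gammaC_two_mul, neg_one_pow_sub_one_eq_neg hN,
    (even_two_mul k).neg_one_zpow]
  linear_combination 2 * h2N - 2 * hsplit

/-- Lemma 10 of the paper: `β + γ + 2(-1)^{N-1} = 0` iff (i) `m ≡ 0 (mod 4)` and `N`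
even, (ii) `m ≡ 2 (mod 4)` and `N ≡ 2 (mod 4)`, or (iii) `m ≡ 4 (mod 8)` and `N` odd;
and when nonzero, `|β + γ + 2(-1)^{N-1}| ≥ 2`. -/
theorem beta_gamma_lemma (m : ℤ) (N : ℕ) (hN : 1 ≤ N) :
    (betaC m N + gammaC m N + 2 * (-1 : ℂ) ^ (N - 1) = 0 ↔
      (m % 4 = 0 ∧ Even N) ∨ (m % 4 = 2 ∧ N % 4 = 2) ∨ (m % 8 = 4 ∧ Odd N)) ∧
    (betaC m N + gammaC m N + 2 * (-1 : ℂ) ^ (N - 1) ≠ 0 →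
      2 ≤ ‖betaC m N + gammaC m N + 2 * (-1 : ℂ) ^ (N - 1)‖) := by
  obtain ⟨k, rfl | rfl⟩ := Int.even_or_odd' m
  · rw [betaC_add_gammaC_add_two_mul_neg_one_pow_of_two_mul k hN]
    set u := I ^ (k * ((N : ℤ) - 2) - 2 * N)
    refine ⟨?_, fun hne => ?_⟩
    · rw [mul_eq_zero, or_iff_right (mul_ne_zero two_ne_zero (zpow_ne_zero _ I_ne_zero)),
        sub_eq_zero, isPrimitiveRoot_I.zpow_eq_one_iff_dvd]
      exact four_dvd_mul_sub_two_sub_iff k N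
    · have hu4 : u ^ 4 = 1 := by rw [← zpow_natCast, ← zpow_mul, mul_comm, zpow_mul]; simp
      have hu1 : u ≠ 1 := sub_ne_zero.1 (right_ne_zero_of_mul hne)
      have h2N : ‖2 * I ^ (2 * (N : ℤ))‖ = 2 := by simp
      rw [norm_mul, h2N]
      linarith [one_le_norm_sub_one_of_pow_four_eq_one hu4 hu1]
  · rw [betaC_add_gammaC_two_mul_add_one, zero_add]
    have h2 : ‖2 * (-1 : ℂ) ^ (N - 1)‖ = 2 := by simp
    exact ⟨⟨fun h => by simp at h, fun h => by omega⟩, fun _ => h2.ge⟩
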